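/- arXiv:2510.18048 — 4 statements merged into one kernel-verified Lean document; each statement's English description precedes it below -/
import Mathlib

section
/- For every integer n ≥ 3, there exists a graph homomorphism φ from the sunlet graph S¹_{n²} to the toroidal grid C_n □ C_n such that (i) the induced map on edge sets is a bijection, (ii) every vertex of C_n □ C_n has exactly two φ-preimages, and (iii) φ is injective on the set of cycle vertices of the sunlet, so the image of the sunlet's cycle Z(S¹_{n²}) is a Hamiltonian cycle of C_n □ C_n. -/
/-- The sunlet graph `S¹_p` on vertex set `ZMod p ⊕ ZMod p`: `inl k` (a cycle vertex)
is adjacent to `inl (k+1)`, and `inl k` is adjacent to the leaf `inr k`. -/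
def sunlet (p : ℕ) : SimpleGraph (ZMod p ⊕ ZMod p) :=
  SimpleGraph.fromRel (fun u w =>
    match u, w with
    | Sum.inl a, Sum.inl b => b = a + 1
    | Sum.inl a, Sum.inr b => a = b
    | _, _ => False)

/-- The toroidal grid `C_n □ C_n` on vertex set `ZMod n × ZMod n`. -/
def torGrid (n : ℕ) : SimpleGraph (ZMod n × ZMod n) :=
  SimpleGraph.fromRel (fun u w =>
    (u.1 = w.1 ∧ w.2 = u.2 + 1) ∨ (u.2 = w.2 ∧ w.1 = u.1 + 1))

/-!
Write a cycle vertex of the sunlet as `k = q n + r` with `q, r < n` and send it to `(q, r - q)`.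
Consecutive cycle vertices then differ by `(0, 1)`, except when `r = n - 1`, i.e. when the image
lies on the anti-diagonal `x + y = -1`, where they differ by `(1, 0)`. So the cycle becomes a
Hamiltonian cycle of the torus leaving each vertex `v` along one of its two forward edges
`v + (1, 0)`, `v + (0, 1)`, and the leaf at `k` is sent along the other one. For `n ≥ 3` every
torus edge is the forward edge of exactly one vertex in exactly one direction, so the map is
bijective on edges. The leaf images form a bijection as well: a leaf step raises `x + y` by one,
and its direction is recovered from whether the target has `x + y = 0`.
-/

open Function

lemma ZMod.two_ne_zero_of_two_lt {m : ℕ} (hm : 2 < m) : (2 : ZMod m) ≠ 0 := by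
  intro h
  have := Nat.le_of_dvd two_pos ((ZMod.natCast_eq_zero_iff 2 m).1 (by exact_mod_cast h))
  omega

section TorGrid

variable {n : ℕ}

variable (n) in
def torStep (b : Bool) : ZMod n × ZMod n := if b then (1, 0) else (0, 1)

variable (n) in
def torEdge (x : (ZMod n × ZMod n) × Bool) : Sym2 (ZMod n × ZMod n) :=
  s(x.1, x.1 + torStep n x.2)

lemma torEdge_mem_edgeSet [Nontrivial (ZMod n)] (x : (ZMod n × ZMod n) × Bool) :
    torEdge n x ∈ (torGrid n).edgeSet := by
  obtain ⟨v, _ | _⟩ := x <;> simp [torEdge, torStep, torGrid, Prod.ext_iff]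

lemma torEdge_injective (h2 : (2 : ZMod n) ≠ 0) : Injective (torEdge n) := by
  have : Nontrivial (ZMod n) := nontrivial_of_ne 2 0 h2
  rintro ⟨v, b⟩ ⟨w, c⟩ h
  simp only [torEdge, Sym2.eq_iff] at h
  rcases h with ⟨rfl, h⟩ | ⟨rfl, h⟩
  · cases b <;> cases c <;> simp_all [torStep, Prod.ext_iff]
  · cases b <;> cases c <;>
      simp [torStep, Prod.ext_iff, add_assoc, one_add_one_eq_two] at h <;> simp_all

lemma exists_torEdge_eq {e : Sym2 (ZMod n × ZMod n)} (he : e ∈ (torGrid n).edgeSet) :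
    ∃ x, torEdge n x = e := by
  induction e with
  | _ u w =>
    obtain ⟨-, (⟨h1, h2⟩ | ⟨h1, h2⟩) | (⟨h1, h2⟩ | ⟨h1, h2⟩)⟩ := he <;>
      dsimp only at h1 h2
    · exact ⟨(u, false), by simp [torEdge, torStep, Prod.ext_iff, h1, h2]⟩
    · exact ⟨(u, true), by simp [torEdge, torStep, Prod.ext_iff, h1, h2]⟩
    · exact ⟨(w, false), by simp [torEdge, torStep, Prod.ext_iff, h1, h2]⟩
    · exact ⟨(w, true), by simp [torEdge, torStep, Prod.ext_iff, h1, h2]⟩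

end TorGrid

section Sunlet

variable {p : ℕ}

variable (p) in
def sunletEdge (x : ZMod p × Bool) : Sym2 (ZMod p ⊕ ZMod p) :=
  s(.inl x.1, if x.2 then .inr x.1 else .inl (x.1 + 1))

lemma sunletEdge_mem_edgeSet [Nontrivial (ZMod p)] (x : ZMod p × Bool) :
    sunletEdge p x ∈ (sunlet p).edgeSet := by
  obtain ⟨k, _ | _⟩ := x <;> simp [sunletEdge, sunlet]

lemma sunletEdge_injective (h2 : (2 : ZMod p) ≠ 0) : Injective (sunletEdge p) := by
  rintro ⟨k, _ | _⟩ ⟨l, _ | _⟩ h <;> simp [sunletEdge] at h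
  · rcases h with rfl | ⟨rfl, h⟩
    · rfl
    · exact absurd (by linear_combination h) h2
  · rw [h]

lemma exists_sunletEdge_eq {e : Sym2 (ZMod p ⊕ ZMod p)} (he : e ∈ (sunlet p).edgeSet) :
    ∃ x, sunletEdge p x = e := by
  induction e with
  | _ u w =>
    obtain ⟨-, h⟩ := he
    rcases u with a | a <;> rcases w with b | b <;> simp only [or_false, false_or] at h
    · rcases h with rfl | rfl
      · exact ⟨(a, false), rfl⟩
      · exact ⟨(b, false), Sym2.eq_swap⟩
    · exact ⟨(a, true), by simp [sunletEdge, (h : a = b)]⟩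
    · exact ⟨(b, true), by simp [sunletEdge, (h : b = a), Sym2.eq_swap]⟩

end Sunlet

section DiagWalk

variable {n : ℕ}

def diagTurn (v : ZMod n × ZMod n) : Bool := v.1 + v.2 = -1

-- Defined on all of `ℕ` so that the successor formula has no wrap-around case.
variable (n) in
def diagWalkNat (a : ℕ) : ZMod n × ZMod n := ((a / n : ℕ), (a : ZMod n) - (a / n : ℕ))

lemma diagTurn_diagWalkNat (a : ℕ) : diagTurn (diagWalkNat n a) = decide (n ∣ a + 1) := by
  simp only [diagTurn, diagWalkNat, add_sub_cancel, ← ZMod.natCast_eq_zero_iff,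
    Nat.cast_succ, add_eq_zero_iff_eq_neg]

lemma diagWalkNat_succ (a : ℕ) :
    diagWalkNat n (a + 1) = diagWalkNat n a + torStep n (diagTurn (diagWalkNat n a)) := by
  rw [diagTurn_diagWalkNat]
  by_cases h : n ∣ a + 1 <;>
    simp only [diagWalkNat, torStep, Nat.succ_div, h, decide_true, decide_false, if_true,
      if_false] <;> ext <;> push_cast [Prod.fst_add, Prod.snd_add] <;> ring

lemma diagWalkNat_mod_sq (a : ℕ) : diagWalkNat n (a % n ^ 2) = diagWalkNat n a := by
  have hlow : ((a % n ^ 2 : ℕ) : ZMod n) = a :=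
    (ZMod.natCast_eq_natCast_iff' _ _ _).2 (Nat.mod_mod_of_dvd a (dvd_pow_self n two_ne_zero))
  rw [diagWalkNat, hlow, sq, Nat.mod_mul_right_div_self, ZMod.natCast_mod, diagWalkNat]

variable (n) in
def diagWalk (k : ZMod (n ^ 2)) : ZMod n × ZMod n := diagWalkNat n k.val

lemma diagWalk_add_one [NeZero n] (k : ZMod (n ^ 2)) :
    diagWalk n (k + 1) = diagWalk n k + torStep n (diagTurn (diagWalk n k)) := by
  rw [diagWalk, ZMod.val_add, ZMod.val_one_eq_one_mod, Nat.add_mod_mod, diagWalkNat_mod_sq,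
    diagWalkNat_succ, diagWalk]

lemma diagWalkNat_injOn : Set.InjOn (diagWalkNat n) (Set.Iio (n ^ 2)) := by
  intro a ha b hb h
  have hdiv {c : ℕ} (hc : c < n ^ 2) : c / n < n := Nat.div_lt_of_lt_mul (by rwa [← sq])
  obtain ⟨hq, hr⟩ := Prod.mk.inj h
  rw [hq, sub_left_inj, ZMod.natCast_eq_natCast_iff'] at hr
  rw [ZMod.natCast_eq_natCast_iff', Nat.mod_eq_of_lt (hdiv ha), Nat.mod_eq_of_lt (hdiv hb)] at hq
  rw [← Nat.div_add_mod a n, ← Nat.div_add_mod b n, hq, hr]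

lemma diagWalk_bijective [NeZero n] : Bijective (diagWalk n) := by
  refine (Nat.bijective_iff_injective_and_card _).2 ⟨fun k l h => ?_, by simp [sq]⟩
  exact ZMod.val_injective _ (diagWalkNat_injOn (ZMod.val_lt k) (ZMod.val_lt l) h)

end DiagWalk

lemma card_preimage_sumElim_singleton_of_bijective {α β γ : Type*}
    {f : α → γ} {g : β → γ} (hf : Bijective f) (hg : Bijective g) (c : γ) :
    Nat.card (Sum.elim f g ⁻¹' {c}) = 2 := by
  obtain ⟨a, rfl⟩ := hf.2 c
  obtain ⟨b, hb⟩ := hg.2 (f a)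
  have hfiber : Sum.elim f g ⁻¹' {f a} = {.inl a, .inr b} := by
    ext (x | x)
    · simp [hf.1.eq_iff]
    · simp [← hb, hg.1.eq_iff]
  rw [hfiber, Nat.card_coe_set_eq, Set.ncard_pair Sum.inl_ne_inr]

section Cover

variable {n : ℕ}

def leafStep (v : ZMod n × ZMod n) : ZMod n × ZMod n := v + torStep n !(diagTurn v)

lemma leafStep_sum (v : ZMod n × ZMod n) :
    (leafStep v).1 + (leafStep v).2 = v.1 + v.2 + 1 := by
  cases h : diagTurn v <;> simp [leafStep, torStep, h] <;> ring

lemma leafStep_bijective [NeZero n] : Bijective (leafStep (n := n)) := by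
  refine Finite.injective_iff_bijective.1 fun v w h => ?_
  have hturn : diagTurn v = diagTurn w := by
    have hsum := congrArg (fun u => u.1 + u.2) h
    simp only [leafStep_sum, add_left_inj] at hsum
    simp [diagTurn, hsum]
  rw [leafStep, leafStep, hturn] at h
  exact add_right_cancel h

variable (n) in
def coverMap : ZMod (n ^ 2) ⊕ ZMod (n ^ 2) → ZMod n × ZMod n :=
  Sum.elim (diagWalk n) (leafStep ∘ diagWalk n)

variable (n) in
def coverEdgeIndex (x : ZMod (n ^ 2) × Bool) : (ZMod n × ZMod n) × Bool :=
  (diagWalk n x.1, xor x.2 (diagTurn (diagWalk n x.1)))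

lemma map_sunletEdge [NeZero n] (x : ZMod (n ^ 2) × Bool) :
    (sunletEdge (n ^ 2) x).map (coverMap n) = torEdge n (coverEdgeIndex n x) := by
  obtain ⟨k, _ | _⟩ := x
  · simp [sunletEdge, torEdge, coverMap, coverEdgeIndex, diagWalk_add_one]
  · simp [sunletEdge, torEdge, coverMap, coverEdgeIndex, leafStep]

lemma coverEdgeIndex_bijective [NeZero n] : Bijective (coverEdgeIndex n) := by
  have hflip : Involutive fun y : (ZMod n × ZMod n) × Bool => (y.1, xor y.2 (diagTurn y.1)) :=
    fun y => by simp
  exact hflip.bijective.comp (diagWalk_bijective.prodMap bijective_id)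

variable (n) in
def sunletCover [Fact (1 < n)] : sunlet (n ^ 2) →g torGrid n where
  toFun := coverMap n
  map_rel' {u w} h := by
    obtain ⟨x, hx⟩ := exists_sunletEdge_eq (e := s(u, w)) h
    have hmem := torEdge_mem_edgeSet (coverEdgeIndex n x)
    rwa [← map_sunletEdge, hx] at hmem

lemma sunletCover_mapEdgeSet_bijective [Fact (1 < n)] (h2 : (2 : ZMod n) ≠ 0) :
    Bijective (sunletCover n).mapEdgeSet := by
  have h2sq : (2 : ZMod (n ^ 2)) ≠ 0 := fun h => h2 <| by
    simpa only [map_ofNat, map_zero] using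
      congrArg (ZMod.castHom (dvd_pow_self n two_ne_zero) (ZMod n)) h
  have : Nontrivial (ZMod (n ^ 2)) := nontrivial_of_ne 2 0 h2sq
  let sunletEdges := (sunlet (n ^ 2)).edgeSet.codRestrict _ sunletEdge_mem_edgeSet
  let torEdges := (torGrid n).edgeSet.codRestrict _ torEdge_mem_edgeSet
  have hS : Bijective sunletEdges :=
    ⟨fun x y h => sunletEdge_injective h2sq (congrArg Subtype.val h),
      fun e => (exists_sunletEdge_eq e.2).imp fun x hx => Subtype.ext hx⟩
  have hT : Bijective torEdges :=
    ⟨fun x y h => torEdge_injective h2 (congrArg Subtype.val h),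
      fun e => (exists_torEdge_eq e.2).imp fun x hx => Subtype.ext hx⟩
  have hcomm : (sunletCover n).mapEdgeSet ∘ sunletEdges = torEdges ∘ coverEdgeIndex n :=
    funext fun x => Subtype.ext (map_sunletEdge x)
  rw [← Bijective.of_comp_iff _ hS, hcomm]
  exact hT.comp coverEdgeIndex_bijective

end Cover

/-- For `n ≥ 3` there is a homomorphism from the sunlet `S¹_{n²}` to `C_n □ C_n`
which is bijective on edges, 2-to-1 on vertices, and injective on the sunlet's
cycle vertices (so the unique cycle maps onto a Hamiltonian cycle). -/
theorem sunlet_covering_one (n : ℕ) (hn : 3 ≤ n) :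
    ∃ φ : sunlet (n ^ 2) →g torGrid n,
      Function.Bijective φ.mapEdgeSet ∧
      (∀ v : ZMod n × ZMod n, Nat.card (⇑φ ⁻¹' {v} : Set (ZMod (n ^ 2) ⊕ ZMod (n ^ 2))) = 2) ∧
      Function.Injective (fun k : ZMod (n ^ 2) => φ (Sum.inl k)) := by
  have : Fact (1 < n) := ⟨by omega⟩
  refine ⟨sunletCover n, sunletCover_mapEdgeSet_bijective (ZMod.two_ne_zero_of_two_lt hn), ?_,
    diagWalk_bijective.injective⟩
  exact card_preimage_sumElim_singleton_of_bijective diagWalk_bijective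
    (leafStep_bijective.comp diagWalk_bijective)
end

section
/- For every integer n ≥ 2, there exists a graph homomorphism φ from the disjoint union of n² copies of the sunlet graph S¹_4 to the toroidal grid C_{2n} □ C_{2n} such that (i) the induced map on edge sets is a bijection, (ii) every vertex of C_{2n} □ C_{2n} has exactly two φ-preimages, and (iii) φ is injective on the set of all cycle vertices of the n² sunlets (so the n² sunlet 4-cycles map isomorphically onto n² pairwise vertex-disjoint 4-cycles). -/
/-- The disjoint union of `m` copies of a graph `H`: vertex set `Fin m × V`,
with `(i,u)` adjacent to `(j,w)` iff `i = j` and `u` adjacent to `w`. -/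
def copies (m : ℕ) {V : Type*} (H : SimpleGraph V) : SimpleGraph (Fin m × V) where
  Adj a b := a.1 = b.1 ∧ H.Adj a.2 b.2
  symm := ⟨fun a b h => ⟨h.1.symm, h.2.symm⟩⟩
  loopless := ⟨fun a h => H.loopless.irrefl a.2 h.2⟩

/-!
Cut `C_{2n} □ C_{2n}` into the `n²` squares `{2a, 2a+1} × {2b, 2b+1}` and wrap one sunlet around
each square: its cycle vertex `k` goes to corner `k`, and its leaf `k` one step out of the square,
in direction `k + 2`, opposite to the cycle edge leaving corner `k` in direction `k`. That leaf
lands on corner `k + 1` of a neighbouring square, so every torus vertex is hit by exactly one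
cycle vertex and one leaf.

Orient the image of each sunlet edge away from the cycle vertex `k` it leaves (towards `k + 1` or
towards leaf `k`). Its direction, `k` or `k + 2`, then has the parity of the colour `x + y` of its
tail, and every torus edge has exactly one orientation with this property: reversing an edge
changes the colour of the tail but not the parity of the direction. Hence the edge map is a
bijection.
-/

open Function

namespace SunletCover

lemma zmod_four_cases (k : ZMod 4) : k = 0 ∨ k = 1 ∨ k = 2 ∨ k = 3 := by
  decide +revert

section Torus

variable {m : ℕ}

def step : ZMod 4 → ZMod m × ZMod m := ![(0, 1), (1, 0), (0, -1), (-1, 0)]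

lemma step_add_two (j : ZMod 4) : step (j + 2) = -(step j : ZMod m × ZMod m) := by
  rcases zmod_four_cases j with rfl | rfl | rfl | rfl <;> reduce_mod_char <;> simp [step]

lemma step_injective [Fact (2 < m)] : Injective (step : ZMod 4 → ZMod m × ZMod m) := by
  have : Fact (1 < m) := ⟨one_lt_two.trans Fact.out⟩
  have h : (1 : ZMod m) ≠ -1 := ZMod.neg_one_ne_one.symm
  intro i j hij
  fin_cases i <;> fin_cases j <;> simp_all [step, Prod.ext_iff, h.symm] <;> rfl

lemma exists_step_of_torGrid_adj {u w : ZMod m × ZMod m} (h : (torGrid m).Adj u w) :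
    ∃ j, w = u + step j := by
  rw [torGrid, SimpleGraph.fromRel_adj] at h
  rcases h with ⟨-, (⟨h1, h2⟩ | ⟨h1, h2⟩) | ⟨h1, h2⟩ | ⟨h1, h2⟩⟩
  · exact ⟨0, Prod.ext (by simp [step, h1]) (by simp [step, h2])⟩
  · exact ⟨1, Prod.ext (by simp [step, h2]) (by simp [step, h1])⟩
  · exact ⟨2, Prod.ext (by simp [step, h1]) (by simp [step, h2])⟩
  · exact ⟨3, Prod.ext (by simp [step, h2]) (by simp [step, h1])⟩

lemma torGrid_adj_add_step [Nontrivial (ZMod m)] (u : ZMod m × ZMod m) (j : ZMod 4) :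
    (torGrid m).Adj u (u + step j) := by
  rw [torGrid, SimpleGraph.fromRel_adj]
  rcases zmod_four_cases j with rfl | rfl | rfl | rfl <;> simp [step, Prod.ext_iff]

end Torus

section Parity

variable {n : ℕ}

def modTwo : ZMod (2 * n) →+* ZMod 2 := ZMod.castHom (dvd_mul_right 2 n) (ZMod 2)

def dirParity : ZMod 4 →+* ZMod 2 := ZMod.castHom (by norm_num) (ZMod 2)

def parity (u : ZMod (2 * n) × ZMod (2 * n)) : ZMod 2 := modTwo u.1 + modTwo u.2

lemma parity_add_step (u : ZMod (2 * n) × ZMod (2 * n)) (j : ZMod 4) :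
    parity (u + step j) = parity u + 1 := by
  rcases zmod_four_cases j with rfl | rfl | rfl | rfl <;> simp [parity, step] <;> ring_nf

lemma dirParity_add_two (j : ZMod 4) : dirParity (j + 2) = dirParity j := by
  rw [map_add, add_eq_left]
  decide

def IsPositive (u : ZMod (2 * n) × ZMod (2 * n)) (j : ZMod 4) : Prop :=
  parity u = dirParity j

lemma IsPositive.eq_of_sym2_eq [Fact (2 < 2 * n)] {u u' : ZMod (2 * n) × ZMod (2 * n)}
    {j j' : ZMod 4} (h : IsPositive u j) (h' : IsPositive u' j')
    (he : s(u, u + step j) = s(u', u' + step j')) : u = u' ∧ j = j' := by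
  rcases Sym2.eq_iff.mp he with ⟨rfl, he⟩ | ⟨rfl, he⟩
  · exact ⟨rfl, step_injective (add_left_cancel he)⟩
  · have hj : j' = j + 2 := by
      apply step_injective (m := 2 * n)
      rw [step_add_two, eq_neg_iff_add_eq_zero]
      simpa [add_assoc] using he
    have : parity u' + 1 = parity u' := by
      rw [← parity_add_step u' j', h, h', hj, dirParity_add_two]
    exact absurd this (by simp)

lemma exists_isPositive_of_torGrid_adj {u w : ZMod (2 * n) × ZMod (2 * n)}
    (h : (torGrid (2 * n)).Adj u w) :
    ∃ u' j, IsPositive u' j ∧ s(u, w) = s(u', u' + step j) := by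
  obtain ⟨j, rfl⟩ := exists_step_of_torGrid_adj h
  by_cases hj : IsPositive u j
  · exact ⟨u, j, hj, rfl⟩
  · refine ⟨u + step j, j + 2, ?_, ?_⟩
    · have : ∀ a b : ZMod 2, a ≠ b → a + 1 = b := by decide
      rw [IsPositive, parity_add_step, dirParity_add_two]
      exact this _ _ hj
    · rw [step_add_two, add_neg_cancel_right, Sym2.eq_swap]

end Parity

section Squares

variable {n : ℕ}

def double : ZMod n →+ ZMod (2 * n) :=
  ZMod.lift n ⟨zmultiplesHom (ZMod (2 * n)) 2, by
    simpa [mul_comm] using ZMod.natCast_self (2 * n)⟩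

lemma double_natCast (a : ℕ) : double (a : ZMod n) = 2 * a := by
  conv_lhs => rw [← Int.cast_natCast, double, ZMod.lift_coe]
  simp [mul_comm]

lemma double_one : double (1 : ZMod n) = 2 := by
  simpa using double_natCast (n := n) 1

def squareCorner : ZMod 4 → ZMod 2 × ZMod 2 := ![(0, 0), (0, 1), (1, 1), (1, 0)]

lemma squareCorner_injective : Injective squareCorner := by decide

/-- Corner `k` of the square `{2a, 2a+1} × {2b, 2b+1}`, where `β = (a, b)`. -/
def squareVertex (β : ZMod n × ZMod n) (k : ZMod 4) : ZMod (2 * n) × ZMod (2 * n) :=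
  (double β.1 + (squareCorner k).1.val, double β.2 + (squareCorner k).2.val)

lemma squareVertex_add_step (β : ZMod n × ZMod n) (k : ZMod 4) :
    squareVertex β k + step k = squareVertex β (k + 1) := by
  rcases zmod_four_cases k with rfl | rfl | rfl | rfl <;> reduce_mod_char <;>
    simp [squareVertex, squareCorner, step, -ZMod.natCast_val, ZMod.val_one]

def leafVertex (β : ZMod n × ZMod n) (k : ZMod 4) : ZMod (2 * n) × ZMod (2 * n) :=
  squareVertex β k + step (k + 2)

lemma leafVertex_eq (β : ZMod n × ZMod n) (k : ZMod 4) :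
    leafVertex β k = squareVertex (β + step (k + 2)) (k + 1) := by
  rw [leafVertex]
  rcases zmod_four_cases k with rfl | rfl | rfl | rfl <;> reduce_mod_char <;>
    simp [squareVertex, squareCorner, step, -ZMod.natCast_val, ZMod.val_one,
      double_one] <;>
    ring

variable [NeZero n]

lemma modTwo_double (a : ZMod n) : modTwo (double a) = 0 := by
  rw [← ZMod.natCast_zmod_val a, double_natCast, map_mul, map_ofNat,
    show (2 : ZMod 2) = 0 from rfl, zero_mul]

lemma double_injective : Injective (double : ZMod n → ZMod (2 * n)) := by
  intro a b h
  rw [← ZMod.natCast_zmod_val a, ← ZMod.natCast_zmod_val b, double_natCast, double_natCast] at h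
  have ha := a.val_lt
  have hb := b.val_lt
  norm_cast at h
  rw [ZMod.natCast_eq_natCast_iff', Nat.mod_eq_of_lt (by omega), Nat.mod_eq_of_lt (by omega)] at h
  exact ZMod.val_injective n (by omega)

lemma double_add_val_inj {a a' : ZMod n} {r r' : ZMod 2} :
    double a + (r.val : ZMod (2 * n)) = double a' + r'.val ↔ a = a' ∧ r = r' := by
  refine ⟨fun h => ?_, fun ⟨ha, hr⟩ => ha ▸ hr ▸ rfl⟩
  have hr : r = r' := by
    have := congrArg modTwo h
    simpa only [map_add, modTwo_double, zero_add, map_natCast, ZMod.natCast_zmod_val] using this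
  subst hr
  exact ⟨double_injective (add_right_cancel h), rfl⟩

lemma squareVertex_injective : Injective (uncurry (squareVertex (n := n))) := by
  rintro ⟨β, k⟩ ⟨β', k'⟩ h
  simp only [uncurry_apply_pair, squareVertex, Prod.mk.injEq] at h
  obtain ⟨ha, hr⟩ := double_add_val_inj.mp h.1
  obtain ⟨hb, hs⟩ := double_add_val_inj.mp h.2
  rw [Prod.mk.injEq]
  exact ⟨Prod.ext ha hb, squareCorner_injective (Prod.ext hr hs)⟩

lemma squareVertex_bijective : Bijective (uncurry (squareVertex (n := n))) := by
  rw [Fintype.bijective_iff_injective_and_card]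
  refine ⟨squareVertex_injective, ?_⟩
  simp only [Fintype.card_prod, ZMod.card]
  ring

lemma parity_squareVertex (β : ZMod n × ZMod n) (k : ZMod 4) :
    parity (squareVertex β k) = dirParity k := by
  simp only [parity, squareVertex, map_add, modTwo_double, zero_add, map_natCast,
    ZMod.natCast_zmod_val]
  fin_cases k <;> rfl

lemma leafVertex_bijective : Bijective (uncurry (leafVertex (n := n))) := by
  have hshift :
      Injective fun x : (ZMod n × ZMod n) × ZMod 4 => (x.1 + step (x.2 + 2), x.2 + 1) := by
    rintro ⟨β, k⟩ ⟨β', k'⟩ h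
    simp only [Prod.mk.injEq, add_left_inj] at h
    obtain ⟨hβ, rfl⟩ := h
    rw [add_left_inj] at hβ
    rw [hβ]
  convert squareVertex_bijective.comp (Finite.injective_iff_bijective.mp hshift) using 1
  ext1 ⟨β, k⟩
  exact leafVertex_eq β k

end Squares

section Sunlet

variable {p : ℕ}

def sunletOut (k : ZMod p) : Bool → ZMod p ⊕ ZMod p
  | false => .inl (k + 1)
  | true => .inr k

lemma sunlet_adj_sunletOut [Nontrivial (ZMod p)] (k : ZMod p) (b : Bool) :
    (sunlet p).Adj (.inl k) (sunletOut k b) := by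
  cases b <;> simp [sunlet, sunletOut]

lemma exists_sunletOut_of_sunlet_adj {u w : ZMod p ⊕ ZMod p} (h : (sunlet p).Adj u w) :
    ∃ k b, s(u, w) = s(.inl k, sunletOut k b) := by
  rw [sunlet, SimpleGraph.fromRel_adj] at h
  rcases u with a | a <;> rcases w with c | c <;> simp only [ne_eq, Sum.inl.injEq, Sum.inr.injEq,
    reduceCtorEq, not_false_eq_true, true_and, and_false, or_false, false_or, or_self] at h
  · rcases h.2 with rfl | rfl
    · exact ⟨a, false, rfl⟩
    · exact ⟨c, false, Sym2.eq_swap⟩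
  · subst h
    exact ⟨a, true, rfl⟩
  · subst h
    exact ⟨c, true, Sym2.eq_swap⟩

variable {N : ℕ}

lemma exists_eq_sunletOut_of_mem_edgeSet {e : Sym2 (Fin N × (ZMod p ⊕ ZMod p))}
    (he : e ∈ (copies N (sunlet p)).edgeSet) :
    ∃ i k b, e = s((i, .inl k), (i, sunletOut k b)) := by
  induction e using Sym2.ind with | h x y => ?_
  obtain ⟨i, u⟩ := x
  obtain ⟨j, w⟩ := y
  obtain ⟨rfl : i = j, hadj⟩ := he
  obtain ⟨k, b, h⟩ := exists_sunletOut_of_sunlet_adj hadj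
  refine ⟨i, k, b, ?_⟩
  rcases Sym2.eq_iff.mp h with ⟨rfl, rfl⟩ | ⟨rfl, rfl⟩
  · rfl
  · exact Sym2.eq_swap

lemma sunletOut_mem_edgeSet [Nontrivial (ZMod p)] (i : Fin N) (k : ZMod p) (b : Bool) :
    s((i, .inl k), (i, sunletOut k b)) ∈ (copies N (sunlet p)).edgeSet :=
  ⟨rfl, sunlet_adj_sunletOut k b⟩

end Sunlet

section Cover

def dirOffset : Bool → ZMod 4
  | false => 0
  | true => 2

lemma dirOffset_injective : Injective dirOffset := by decide

lemma dirParity_add_dirOffset (k : ZMod 4) (b : Bool) :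
    dirParity (k + dirOffset b) = dirParity k := by
  cases b
  · rw [dirOffset, add_zero]
  · exact dirParity_add_two k

lemma exists_eq_add_dirOffset {j k : ZMod 4} (h : dirParity j = dirParity k) :
    ∃ b, j = k + dirOffset b := by
  revert j k
  decide

variable {N n : ℕ}

def coverMap (blk : Fin N → ZMod n × ZMod n) :
    Fin N × (ZMod 4 ⊕ ZMod 4) → ZMod (2 * n) × ZMod (2 * n)
  | (i, .inl k) => squareVertex (blk i) k
  | (i, .inr k) => leafVertex (blk i) k

lemma coverMap_sunletOut (blk : Fin N → ZMod n × ZMod n) (i : Fin N) (k : ZMod 4) (b : Bool) :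
    coverMap blk (i, sunletOut k b) = squareVertex (blk i) k + step (k + dirOffset b) := by
  cases b
  · simp [coverMap, sunletOut, dirOffset, squareVertex_add_step]
  · rfl

def coverHom (blk : Fin N → ZMod n × ZMod n) : copies N (sunlet 4) →g torGrid (2 * n) where
  toFun := coverMap blk
  map_rel' {x y} h := by
    have : Nontrivial (ZMod (2 * n)) := ZMod.nontrivial_iff.mpr (by omega)
    obtain ⟨i, k, b, he⟩ := exists_eq_sunletOut_of_mem_edgeSet (show s(x, y) ∈ _ from h)
    rcases Sym2.eq_iff.mp he with ⟨rfl, rfl⟩ | ⟨rfl, rfl⟩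
    · rw [coverMap_sunletOut]
      exact torGrid_adj_add_step _ _
    · rw [coverMap_sunletOut]
      exact (torGrid_adj_add_step _ _).symm

lemma coverHom_inl (blk : Fin N → ZMod n × ZMod n) (i : Fin N) (k : ZMod 4) :
    coverHom blk (i, .inl k) = squareVertex (blk i) k := rfl

lemma coverHom_inr (blk : Fin N → ZMod n × ZMod n) (i : Fin N) (k : ZMod 4) :
    coverHom blk (i, .inr k) = leafVertex (blk i) k := rfl

lemma coverHom_map_sunletOut_edge (blk : Fin N → ZMod n × ZMod n) (i : Fin N) (k : ZMod 4)
    (b : Bool) :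
    Sym2.map (coverHom blk) s((i, .inl k), (i, sunletOut k b)) =
      s(squareVertex (blk i) k, squareVertex (blk i) k + step (k + dirOffset b)) := by
  rw [Sym2.map_mk]
  exact congrArg _ (coverMap_sunletOut blk i k b)

variable [NeZero n] (blk : Fin N ≃ ZMod n × ZMod n)

lemma isPositive_squareVertex (β : ZMod n × ZMod n) (k : ZMod 4) (b : Bool) :
    IsPositive (squareVertex β k) (k + dirOffset b) := by
  rw [IsPositive, parity_squareVertex, dirParity_add_dirOffset]

lemma coverHom_mapEdgeSet_injective [Fact (2 < 2 * n)] :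
    Injective (coverHom blk).mapEdgeSet := by
  rintro ⟨e, he⟩ ⟨e', he'⟩ h
  obtain ⟨i, k, b, rfl⟩ := exists_eq_sunletOut_of_mem_edgeSet he
  obtain ⟨i', k', b', rfl⟩ := exists_eq_sunletOut_of_mem_edgeSet he'
  have h := congrArg Subtype.val h
  simp only [SimpleGraph.Hom.mapEdgeSet_coe, coverHom_map_sunletOut_edge] at h
  obtain ⟨hv, hj⟩ := (isPositive_squareVertex _ k b).eq_of_sym2_eq
    (isPositive_squareVertex _ k' b') h
  obtain ⟨hi, rfl⟩ :=
    Prod.ext_iff.mp (squareVertex_injective (a₁ := (blk i, k)) (a₂ := (blk i', k')) hv)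
  cases blk.injective hi
  cases dirOffset_injective (add_left_cancel hj)
  rfl

lemma coverHom_mapEdgeSet_surjective : Surjective (coverHom blk).mapEdgeSet := by
  rintro ⟨e, he⟩
  induction e using Sym2.ind with | h u w => ?_
  obtain ⟨v, j, hpos, huw⟩ := exists_isPositive_of_torGrid_adj he
  obtain ⟨⟨β, k⟩, rfl⟩ := squareVertex_bijective.2 v
  obtain ⟨b, rfl⟩ := exists_eq_add_dirOffset (hpos.symm.trans (parity_squareVertex β k))
  have : Fact (1 < 4) := ⟨by norm_num⟩
  refine ⟨⟨_, sunletOut_mem_edgeSet (blk.symm β) k b⟩, Subtype.ext ?_⟩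
  rw [SimpleGraph.Hom.mapEdgeSet_coe, coverHom_map_sunletOut_edge, Equiv.apply_symm_apply]
  exact huw.symm

lemma card_coverHom_preimage (v : ZMod (2 * n) × ZMod (2 * n)) :
    Nat.card (coverHom blk ⁻¹' {v}) = 2 := by
  obtain ⟨⟨β, k⟩, hβ⟩ := squareVertex_bijective.2 v
  obtain ⟨⟨β', k'⟩, hβ'⟩ := leafVertex_bijective.2 v
  have : coverHom blk ⁻¹' {v} = {(blk.symm β, .inl k), (blk.symm β', .inr k')} := by
    ext ⟨i, l | l⟩ <;> simp only [Set.mem_preimage, Set.mem_singleton_iff, Set.mem_insert_iff,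
      Prod.mk.injEq, reduceCtorEq, Sum.inl.injEq, Sum.inr.injEq, and_false, or_false, false_or,
      Equiv.eq_symm_apply]
    · rw [coverHom_inl, ← hβ]
      exact (squareVertex_injective.eq_iff (a := (blk i, l)) (b := (β, k))).trans Prod.ext_iff
    · rw [coverHom_inr, ← hβ']
      exact (leafVertex_bijective.injective.eq_iff (a := (blk i, l)) (b := (β', k'))).trans
        Prod.ext_iff
  rw [this, Nat.card_coe_set_eq, Set.ncard_pair (by simp)]

lemma coverHom_inl_injective :
    Injective fun ik : Fin N × ZMod 4 => coverHom blk (ik.1, .inl ik.2) :=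
  squareVertex_injective.comp (blk.injective.prodMap injective_id)

end Cover

end SunletCover

open SunletCover

/-- For `n ≥ 2` there is a homomorphism from the disjoint union of `n²` copies of the
sunlet `S¹_4` to `C_{2n} □ C_{2n}` which is bijective on edges, 2-to-1 on vertices,
and injective on the cycle vertices of the sunlets. -/
theorem sunlet_covering_squares (n : ℕ) (hn : 2 ≤ n) :
    ∃ φ : copies (n ^ 2) (sunlet 4) →g torGrid (2 * n),
      Function.Bijective φ.mapEdgeSet ∧
      (∀ v : ZMod (2 * n) × ZMod (2 * n),
        Nat.card (⇑φ ⁻¹' {v} : Set (Fin (n ^ 2) × (ZMod 4 ⊕ ZMod 4))) = 2) ∧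
      Function.Injective (fun ik : Fin (n ^ 2) × ZMod 4 => φ (ik.1, Sum.inl ik.2)) := by
  have : NeZero n := ⟨by omega⟩
  have : Fact (2 < 2 * n) := ⟨by omega⟩
  let blk : Fin (n ^ 2) ≃ ZMod n × ZMod n := Fintype.equivOfCardEq (by simp [ZMod.card, sq])
  exact ⟨coverHom blk,
    ⟨coverHom_mapEdgeSet_injective blk, coverHom_mapEdgeSet_surjective blk⟩,
    card_coverHom_preimage blk, coverHom_inl_injective blk⟩
end

section
/- For every integer n ≥ 2, the edge set of the toroidal grid C_{2n} □ C_{2n} can be partitioned into n pairwise edge-disjoint subgraphs, each of which is isomorphic to the sunlet graph S¹_{4n}. -/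
/-!
Index the diagonals of the torus `ℤ/m × ℤ/m` by `y - x`. The staircase with offset `d` walks
alternately right and up through `(k, k + d)` and `(k + 1, k + d)`; its `2m` steps are the
horizontal edges leaving diagonal `d` and the vertical edges leaving diagonal `d - 1`. Hanging
at every step vertex the other edge leaving it gives a copy of the sunlet `S¹_{2m}` whose edges
are exactly the grid edges with lower-left endpoint on diagonal `d` or `d - 1`. For `m = 2n` the
offsets `0, 2, …, 2n - 2` pair up the `2n` diagonals, so these `n` sunlets partition the edges.
-/

open SimpleGraph Sum

section TorGrid

variable {m : ℕ}

def unitSteps (m : ℕ) : Set (ZMod m × ZMod m) := {(1, 0), (0, 1)}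

lemma mem_torGrid_edgeSet [Nontrivial (ZMod m)] {e : Sym2 (ZMod m × ZMod m)} :
    e ∈ (torGrid m).edgeSet ↔ ∃ w, ∃ δ ∈ unitSteps m, e = s(w, w + δ) := by
  induction e using Sym2.ind with
  | _ u v =>
  have hstep : ∀ u v : ZMod m × ZMod m,
      ((u.1 = v.1 ∧ v.2 = u.2 + 1) ∨ (u.2 = v.2 ∧ v.1 = u.1 + 1)) ↔
        ∃ δ ∈ unitSteps m, v = u + δ := by
    intro u v
    simp only [unitSteps, Set.mem_insert_iff, Set.mem_singleton_iff, exists_eq_or_imp,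
      exists_eq_left]
    simp only [Prod.ext_iff, Prod.fst_add, Prod.snd_add, add_zero]
    tauto
  rw [mem_edgeSet, torGrid, fromRel_adj, hstep, hstep]
  constructor
  · rintro ⟨-, ⟨δ, hδ, rfl⟩ | ⟨δ, hδ, rfl⟩⟩
    · exact ⟨u, δ, hδ, rfl⟩
    · exact ⟨v, δ, hδ, Sym2.eq_swap⟩
  · rintro ⟨w, δ, hδ, he⟩
    have hne : w ≠ w + δ := by
      rcases hδ with rfl | rfl <;> simp [Prod.ext_iff]
    rcases Sym2.eq_iff.mp he with ⟨rfl, rfl⟩ | ⟨rfl, rfl⟩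
    · exact ⟨hne, Or.inl ⟨δ, hδ, rfl⟩⟩
    · exact ⟨hne.symm, Or.inr ⟨δ, hδ, rfl⟩⟩

/-- Comparing coordinate sums: a flipped match would force `δ + δ' = 0`, i.e. `2 = 0`. -/
lemma eq_of_mk_add_eq_mk_add (h2 : (2 : ZMod m) ≠ 0) {w w' δ δ' : ZMod m × ZMod m}
    (hδ : δ ∈ unitSteps m) (hδ' : δ' ∈ unitSteps m) (h : s(w, w + δ) = s(w', w' + δ')) :
    w = w' := by
  rcases Sym2.eq_iff.mp h with ⟨hw, -⟩ | ⟨hw, hw'⟩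
  · exact hw
  · have hsum : ∀ δ ∈ unitSteps m, δ.1 + δ.2 = 1 := by
      rintro δ (rfl | rfl) <;> simp
    have := congrArg (fun u => u.1 + u.2) (hw.trans (congrArg (· + δ') hw'.symm))
    simp only [Prod.fst_add, Prod.snd_add] at this
    exact absurd (by linear_combination -this - hsum δ hδ - hsum δ' hδ') h2

end TorGrid

lemma mem_sunlet_edgeSet {p : ℕ} [Nontrivial (ZMod p)] {e : Sym2 (ZMod p ⊕ ZMod p)} :
    e ∈ (sunlet p).edgeSet ↔ ∃ j, e = s(inl j, inl (j + 1)) ∨ e = s(inl j, inr j) := by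
  induction e using Sym2.ind with
  | _ u v =>
  rw [mem_edgeSet, sunlet, fromRel_adj]
  constructor
  · rintro ⟨-, h | h⟩
    · rcases u with a | a <;> rcases v with b | b <;> simp only at h
      · exact ⟨a, Or.inl (by rw [h])⟩
      · exact ⟨a, Or.inr (by rw [h])⟩
    · rcases u with a | a <;> rcases v with b | b <;> simp only at h
      · exact ⟨b, Or.inl (by rw [h, Sym2.eq_swap])⟩
      · exact ⟨b, Or.inr (by rw [h, Sym2.eq_swap])⟩
  · rintro ⟨j, h | h⟩ <;> rcases Sym2.eq_iff.mp h with ⟨rfl, rfl⟩ | ⟨rfl, rfl⟩ <;> simp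

lemma ZMod.natCast_ne_zero_of_lt {a m : ℕ} (ha : 0 < a) (h : a < m) : (a : ZMod m) ≠ 0 := by
  rw [Ne, ZMod.natCast_eq_zero_iff]
  exact fun hdvd => absurd (Nat.le_of_dvd ha hdvd) (by omega)

section Staircase

variable {m : ℕ}

def doubleLift (k : ZMod m) : ZMod (2 * m) := (2 * k.val : ℕ)

lemma doubleLift_add_natCast (k : ZMod m) (b : ℕ) :
    doubleLift k + b = ((2 * k.val + b : ℕ) : ZMod (2 * m)) := by
  rw [doubleLift, Nat.cast_add]

/-- Writing `j = 2k + b` with `b < 2`, the cycle vertex `inl j` goes to `(k + b, k + d)`, so the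
cycle alternates right and up steps, and the pendant `inr j` goes one step up (`b = 0`) or to
the right (`b = 1`) of it. -/
def staircaseMap (d : ZMod m) : ZMod (2 * m) ⊕ ZMod (2 * m) → ZMod m × ZMod m
  | inl j =>
    let k : ZMod m := (j.val / 2 : ℕ)
    if j.val % 2 = 0 then (k, k + d) else (k + 1, k + d)
  | inr j =>
    let k : ZMod m := (j.val / 2 : ℕ)
    if j.val % 2 = 0 then (k, k + d + 1) else (k + 2, k + d)

def diagIndex (u : ZMod m × ZMod m) : ZMod m := u.2 - u.1

def staircaseEdges (d : ZMod m) : Set (Sym2 (ZMod m × ZMod m)) :=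
  {e | ∃ w, (diagIndex w = d ∨ diagIndex w + 1 = d) ∧ ∃ δ ∈ unitSteps m, e = s(w, w + δ)}

/-- The four kinds of vertices of the staircase lie on the diagonals `d`, `d - 1`, `d + 1`,
`d - 2` (distinct once `m ≥ 4`), and the first coordinate then recovers `k`. -/
def staircaseRetraction (d : ZMod m) (u : ZMod m × ZMod m) : ZMod (2 * m) ⊕ ZMod (2 * m) :=
  if diagIndex u = d then inl (doubleLift u.1)
  else if diagIndex u + 1 = d then inl (doubleLift (u.1 - 1) + 1)
  else if diagIndex u = d + 1 then inr (doubleLift u.1)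
  else inr (doubleLift (u.1 - 2) + 1)

section NeZero

variable [NeZero m]

lemma val_doubleLift_add {k : ZMod m} {b : ℕ} (hb : b < 2) :
    (doubleLift k + b).val = 2 * k.val + b := by
  rw [doubleLift_add_natCast, ZMod.val_cast_of_lt]
  have := k.val_lt
  omega

lemma exists_eq_doubleLift (j : ZMod (2 * m)) :
    ∃ k : ZMod m, j = doubleLift k ∨ j = doubleLift k + 1 := by
  set k : ZMod m := ((j.val / 2 : ℕ) : ZMod m)
  have hk : k.val = j.val / 2 := ZMod.val_cast_of_lt (by have := j.val_lt; omega)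
  have hj : j = doubleLift k + (j.val % 2 : ℕ) := by
    rw [doubleLift_add_natCast, hk, Nat.div_add_mod, ZMod.natCast_zmod_val]
  refine ⟨k, ?_⟩
  rcases Nat.mod_two_eq_zero_or_one j.val with h | h <;> rw [h] at hj <;> simp [hj]

lemma doubleLift_add_one_add_one (k : ZMod m) : doubleLift k + 1 + 1 = doubleLift (k + 1) := by
  have hval : (k + 1).val = (k.val + 1) % m := by
    rw [ZMod.val_add, ZMod.val_one_eq_one_mod, Nat.add_mod_mod]
  rw [doubleLift, doubleLift, hval, ← Nat.mul_mod_mul_left, ZMod.natCast_mod, add_assoc,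
    ← one_add_one_eq_two]
  push_cast
  ring

variable (d k : ZMod m)

lemma val_doubleLift : (doubleLift k).val = 2 * k.val := by
  simpa using val_doubleLift_add (k := k) (b := 0) (by norm_num)

lemma val_doubleLift_add_one : (doubleLift k + 1).val = 2 * k.val + 1 := by
  simpa using val_doubleLift_add (k := k) (b := 1) (by norm_num)

@[simp] lemma staircaseMap_inl_doubleLift : staircaseMap d (inl (doubleLift k)) = (k, k + d) := by
  simp [staircaseMap, val_doubleLift]

@[simp] lemma staircaseMap_inl_doubleLift_add_one :
    staircaseMap d (inl (doubleLift k + 1)) = (k + 1, k + d) := by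
  simp [staircaseMap, val_doubleLift_add_one, show (2 * k.val + 1) / 2 = k.val by omega]

@[simp] lemma staircaseMap_inr_doubleLift :
    staircaseMap d (inr (doubleLift k)) = (k, k + d + 1) := by
  simp [staircaseMap, val_doubleLift]

@[simp] lemma staircaseMap_inr_doubleLift_add_one :
    staircaseMap d (inr (doubleLift k + 1)) = (k + 2, k + d) := by
  simp [staircaseMap, val_doubleLift_add_one, show (2 * k.val + 1) / 2 = k.val by omega]

lemma image_staircaseMap_edgeSet :
    Sym2.map (staircaseMap d) '' (sunlet (2 * m)).edgeSet = staircaseEdges d := by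
  have : Fact (1 < 2 * m) := ⟨by have := NeZero.pos m; omega⟩
  have hsteps : (1, 0) ∈ unitSteps m ∧ (0, 1) ∈ unitSteps m := by simp [unitSteps]
  ext e
  constructor
  · rintro ⟨e, he, rfl⟩
    obtain ⟨j, rfl | rfl⟩ := mem_sunlet_edgeSet.1 he <;>
      obtain ⟨k, rfl | rfl⟩ := exists_eq_doubleLift j
    · exact ⟨(k, k + d), Or.inl (by simp [diagIndex]), (1, 0), hsteps.1, by simp⟩
    · refine ⟨(k + 1, k + d), Or.inr (by simp [diagIndex]), (0, 1), hsteps.2, ?_⟩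
      simpa [doubleLift_add_one_add_one] using Or.inl (add_right_comm k 1 d)
    · exact ⟨(k, k + d), Or.inl (by simp [diagIndex]), (0, 1), hsteps.2, by simp⟩
    · refine ⟨(k + 1, k + d), Or.inr (by simp [diagIndex]), (1, 0), hsteps.1, ?_⟩
      simp [add_assoc, one_add_one_eq_two]
  · rintro ⟨w, hw | hw, δ, hδ, rfl⟩
    · obtain ⟨k, rfl⟩ : ∃ k, w = (k, k + d) := ⟨w.1, by ext <;> simp [← hw, diagIndex]⟩
      rcases hδ with rfl | rfl
      · exact ⟨_, mem_sunlet_edgeSet.2 ⟨doubleLift k, Or.inl rfl⟩, by simp⟩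
      · exact ⟨_, mem_sunlet_edgeSet.2 ⟨doubleLift k, Or.inr rfl⟩, by simp⟩
    · obtain ⟨k, rfl⟩ : ∃ k, w = (k + 1, k + d) :=
        ⟨w.1 - 1, by ext <;> simp [← hw, diagIndex]⟩
      rcases hδ with rfl | rfl
      · refine ⟨_, mem_sunlet_edgeSet.2 ⟨doubleLift k + 1, Or.inr rfl⟩, ?_⟩
        simp [add_assoc, one_add_one_eq_two]
      · refine ⟨_, mem_sunlet_edgeSet.2 ⟨doubleLift k + 1, Or.inl rfl⟩, ?_⟩
        simpa [doubleLift_add_one_add_one] using Or.inl (add_right_comm k 1 d)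

lemma staircaseMap_adj [Nontrivial (ZMod m)] {x y : ZMod (2 * m) ⊕ ZMod (2 * m)}
    (hxy : (sunlet (2 * m)).Adj x y) : (torGrid m).Adj (staircaseMap d x) (staircaseMap d y) := by
  have himage : s(staircaseMap d x, staircaseMap d y) ∈
      Sym2.map (staircaseMap d) '' (sunlet (2 * m)).edgeSet := ⟨s(x, y), hxy, rfl⟩
  rw [image_staircaseMap_edgeSet] at himage
  obtain ⟨w, -, δ, hδ, he⟩ := himage
  exact mem_torGrid_edgeSet.2 ⟨w, δ, hδ, he⟩

end NeZero

lemma staircaseRetraction_leftInverse (hm : 4 ≤ m) (d : ZMod m) :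
    Function.LeftInverse (staircaseRetraction d) (staircaseMap d) := by
  have : NeZero m := ⟨by omega⟩
  have hne (a : ℕ) (ha : 0 < a) (ha' : a < 4) : (a : ZMod m) ≠ 0 :=
    ZMod.natCast_ne_zero_of_lt ha (by omega)
  have h1 : (1 : ZMod m) ≠ 0 := by simpa using hne 1
  have h2 : (2 : ZMod m) ≠ 0 := by simpa using hne 2
  have h3 : (3 : ZMod m) ≠ 0 := by simpa using hne 3
  rintro (j | j) <;> obtain ⟨k, rfl | rfl⟩ := exists_eq_doubleLift j
  · simp [staircaseRetraction, diagIndex]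
  · have hdiag : diagIndex (k + 1, k + d) = d - 1 := by simp only [diagIndex]; ring
    rw [staircaseMap_inl_doubleLift_add_one, staircaseRetraction, hdiag,
      if_neg (fun h => h1 (by linear_combination -h)), if_pos (sub_add_cancel d 1),
      add_sub_cancel_right]
  · have hdiag : diagIndex (k, k + d + 1) = d + 1 := by simp only [diagIndex]; ring
    rw [staircaseMap_inr_doubleLift, staircaseRetraction, hdiag,
      if_neg (fun h => h1 (by linear_combination h)),
      if_neg (fun h => h2 (by linear_combination h)),
      if_pos rfl]
  · have hdiag : diagIndex (k + 2, k + d) = d - 2 := by simp only [diagIndex]; ring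
    rw [staircaseMap_inr_doubleLift_add_one, staircaseRetraction, hdiag,
      if_neg (fun h => h2 (by linear_combination -h)),
      if_neg (fun h => h1 (by linear_combination -h)),
      if_neg (fun h => h3 (by linear_combination -h)), add_sub_cancel_right]

def staircase (hm : 4 ≤ m) (d : ZMod m) : Copy (sunlet (2 * m)) (torGrid m) where
  toHom := ⟨staircaseMap d, fun hxy =>
    have : Fact (1 < m) := ⟨by omega⟩
    staircaseMap_adj d hxy⟩
  injective' := (staircaseRetraction_leftInverse hm d).injective

lemma mk_add_mem_staircase_edgeSet_iff (hm : 4 ≤ m) (d : ZMod m) {w δ : ZMod m × ZMod m}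
    (hδ : δ ∈ unitSteps m) :
    s(w, w + δ) ∈ (staircase hm d).toSubgraph.edgeSet ↔
      diagIndex w = d ∨ diagIndex w + 1 = d := by
  have : NeZero m := ⟨by omega⟩
  have h2 : (2 : ZMod m) ≠ 0 := by
    simpa using ZMod.natCast_ne_zero_of_lt two_pos (by omega : 2 < m)
  rw [Subgraph.edgeSet_map, Subgraph.edgeSet_top,
    show ⇑(staircase hm d).toHom = staircaseMap d from rfl, image_staircaseMap_edgeSet]
  constructor
  · rintro ⟨w', hw', δ', hδ', he⟩
    rwa [eq_of_mk_add_eq_mk_add h2 hδ hδ' he]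
  · exact fun hw => ⟨w, hw, δ, hδ, rfl⟩

end Staircase

lemma existsUnique_two_mul_eq_or_add_one_eq {n : ℕ} [NeZero n] (t : ZMod (2 * n)) :
    ∃! i : Fin n, t = (2 * i : ℕ) ∨ t + 1 = (2 * i : ℕ) := by
  have hval {c : ℕ} (hc : c < 2 * n) : t + 1 = c ↔ (t + 1).val = c :=
    ⟨fun h => h ▸ ZMod.val_cast_of_lt hc, fun h => by rw [← h, ZMod.natCast_zmod_val]⟩
  have key (i : Fin n) : (t = (2 * i : ℕ) ∨ t + 1 = (2 * i : ℕ)) ↔ (t + 1).val / 2 = i := by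
    rw [← add_left_inj 1, ← Nat.cast_succ, hval (by omega), hval (by omega)]
    omega
  have hlt : (t + 1).val / 2 < n := by have := (t + 1).val_lt; omega
  exact ⟨⟨_, hlt⟩, (key _).2 rfl, fun i hi => Fin.ext ((key i).1 hi).symm⟩

/-- For `n ≥ 2`, the edge set of `C_{2n} □ C_{2n}` is partitioned by `n` subgraphs,
each isomorphic to the sunlet `S¹_{4n}`. -/
theorem sunlet_factorization_staircase (n : ℕ) (hn : 2 ≤ n) :
    ∃ F : Fin n → (torGrid (2 * n)).Subgraph,
      (∀ i, Nonempty ((F i).coe ≃g sunlet (4 * n))) ∧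
      (∀ e ∈ (torGrid (2 * n)).edgeSet, ∃! i, e ∈ (F i).edgeSet) := by
  have hm : 4 ≤ 2 * n := by omega
  have : NeZero n := ⟨by omega⟩
  have : Fact (1 < 2 * n) := ⟨by omega⟩
  refine ⟨fun i => (staircase hm (2 * i : ℕ)).toSubgraph, fun i => ?_, fun e he => ?_⟩
  · rw [show 4 * n = 2 * (2 * n) by ring]
    exact ⟨(staircase hm _).isoToSubgraph.symm⟩
  · obtain ⟨w, δ, hδ, rfl⟩ := mem_torGrid_edgeSet.1 he
    simpa only [mk_add_mem_staircase_edgeSet_iff hm _ hδ] using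
      existsUnique_two_mul_eq_or_add_one_eq (diagIndex w)
end

section
/- For every integer p ≥ 3, there are exactly two functions f from the vertex set of the sunlet graph S¹_p to itself such that (i) f(v) is adjacent to v for every vertex v, and (ii) the map sending each vertex v to the edge {v, f(v)} is a bijection from the vertex set of S¹_p onto the edge set of S¹_p; namely the function with f(inr k) = inl k and f(inl k) = inl (k+1), and the function with f(inr k) = inl k and f(inl k) = inl (k−1). -/
namespace SimpleGraph

variable {V : Type*} {G : SimpleGraph V} {f : V → V}

/-- `f` orients each edge `{v, f v}` as `v → f v`; every edge is oriented exactly once and every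
vertex gets out-degree one. -/
def IsFSMOrientation (G : SimpleGraph V) (f : V → V) : Prop :=
  (∀ v, G.Adj (f v) v) ∧ Set.BijOn (fun v => s(v, f v)) Set.univ G.edgeSet

theorem IsFSMOrientation.injective (hf : G.IsFSMOrientation f) :
    Function.Injective fun v => s(v, f v) :=
  Set.injOn_univ.mp hf.2.injOn

theorem IsFSMOrientation.apply_apply_ne (hf : G.IsFSMOrientation f) (v : V) : f (f v) ≠ v := by
  intro h
  have hedge : s(f v, f (f v)) = s(v, f v) := by rw [h, Sym2.eq_swap]
  exact (hf.1 v).ne (hf.injective hedge)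

end SimpleGraph

theorem ZMod.forall_apply_eq_add_of_apply_zero {p : ℕ} [NeZero p] {g : ZMod p → ZMod p}
    {ε : ZMod p} (hε : IsUnit ε) (hstep : ∀ k, g k = k + ε ∨ g k = k - ε)
    (hinv : ∀ k, g (g k) ≠ k) (h0 : g 0 = ε) (k : ZMod p) : g k = k + ε := by
  have hsucc : ∀ k, g k = k + ε → g (k + ε) = k + ε + ε := fun k hk =>
    (hstep (k + ε)).resolve_right fun h => hinv k (by rw [hk, h, add_sub_cancel_right])
  have hmul : ∀ n : ℕ, g (n * ε) = n * ε + ε := by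
    intro n
    induction n with
    | zero => simpa using h0
    | succ n ih => simpa only [Nat.cast_succ, add_one_mul] using hsucc _ ih
  -- `ε` generates `ZMod p` additively: `k = (k ε⁻¹).val • ε`.
  obtain ⟨u, rfl⟩ := hε
  simpa only [ZMod.natCast_zmod_val, Units.inv_mul_cancel_right] using hmul (k * ↑u⁻¹).val

theorem ZMod.eq_add_one_or_eq_sub_one {p : ℕ} [NeZero p] {g : ZMod p → ZMod p}
    (hstep : ∀ k, g k = k + 1 ∨ g k = k - 1) (hinv : ∀ k, g (g k) ≠ k) :
    g = (· + 1) ∨ g = (· - 1) := by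
  rcases hstep 0 with h0 | h0
  · exact Or.inl (funext (ZMod.forall_apply_eq_add_of_apply_zero isUnit_one hstep hinv
      (by simpa using h0)))
  · refine Or.inr (funext fun k => ?_)
    have hstep' : ∀ k, g k = k + -1 ∨ g k = k - -1 := fun k => by
      rw [← sub_eq_add_neg, sub_neg_eq_add]; exact (hstep k).symm
    simpa [← sub_eq_add_neg] using ZMod.forall_apply_eq_add_of_apply_zero isUnit_one.neg
      hstep' hinv (by simpa using h0) k

section Sunlet

variable {p : ℕ}

@[simp]
theorem sunlet_adj_inl_inl [Fact (1 < p)] {a b : ZMod p} :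
    (sunlet p).Adj (.inl a) (.inl b) ↔ b = a + 1 ∨ a = b + 1 := by
  simp only [sunlet, SimpleGraph.fromRel_adj, ne_eq, Sum.inl.injEq, and_iff_right_iff_imp]
  rintro (rfl | rfl) <;> simp

@[simp]
theorem sunlet_adj_inl_inr {a b : ZMod p} : (sunlet p).Adj (.inl a) (.inr b) ↔ a = b := by
  simp [sunlet, SimpleGraph.fromRel_adj]

@[simp]
theorem sunlet_adj_inr_inl {a b : ZMod p} : (sunlet p).Adj (.inr a) (.inl b) ↔ a = b := by
  simp [sunlet, SimpleGraph.fromRel_adj, eq_comm]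

@[simp]
theorem sunlet_not_adj_inr_inr {a b : ZMod p} : ¬(sunlet p).Adj (.inr a) (.inr b) := by
  simp [sunlet, SimpleGraph.fromRel_adj]

variable {f : ZMod p ⊕ ZMod p → ZMod p ⊕ ZMod p}

theorem sunlet_apply_inr_of_adj (hadj : ∀ v, (sunlet p).Adj (f v) v) (k : ZMod p) :
    f (.inr k) = .inl k := by
  have hk := hadj (.inr k)
  rcases hfk : f (.inr k) with j | j <;> rw [hfk] at hk
  · rw [sunlet_adj_inl_inr.mp hk]
  · exact absurd hk sunlet_not_adj_inr_inr

theorem sunlet_apply_inl_of_isFSMOrientation [Fact (1 < p)] (hf : (sunlet p).IsFSMOrientation f)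
    (k : ZMod p) : ∃ j, f (.inl k) = .inl j ∧ (j = k + 1 ∨ j = k - 1) := by
  have hk := hf.1 (.inl k)
  rcases hfk : f (.inl k) with j | j <;> rw [hfk] at hk
  · refine ⟨j, rfl, ?_⟩
    rw [sunlet_adj_inl_inl] at hk
    rcases hk with rfl | rfl
    · exact Or.inr (add_sub_cancel_right j 1).symm
    · exact Or.inl rfl
  · obtain rfl := sunlet_adj_inr_inl.mp hk
    exact absurd (by rw [hfk, sunlet_apply_inr_of_adj hf.1]) (hf.apply_apply_ne (.inl j))

theorem sunlet_isFSMOrientation_shift [Fact (1 < p)] {ε : ZMod p} (hε : ε = 1 ∨ ε = -1)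
    (hεε : ε + ε ≠ 0) : (sunlet p).IsFSMOrientation (Sum.elim (fun k => .inl (k + ε)) .inl) := by
  have hadj : ∀ k : ZMod p, (sunlet p).Adj (.inl k) (.inl (k + ε)) := fun k => by
    rcases hε with rfl | rfl <;> simp
  refine ⟨?_, ?_, ?_, ?_⟩
  · rintro (k | k)
    · exact (hadj k).symm
    · simp
  · rintro (k | k) -
    · exact hadj k
    · simp
  · rintro (a | a) - (b | b) - h <;> simp only [Sum.elim_inl, Sum.elim_inr, Sym2.eq_iff,
      Sum.inl.injEq, Sum.inr.injEq, reduceCtorEq, and_false, false_and, and_self, or_false,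
      or_self] at h
    · rcases h with ⟨rfl, -⟩ | ⟨rfl, h⟩
      · rfl
      · exact absurd (by linear_combination h) hεε
    · rw [h]
  · have hcycle : ∀ a : ZMod p, ∃ x, s(x, Sum.elim (fun k => .inl (k + ε)) .inl x) =
        s(.inl a, .inl (a + 1)) := fun a => by
      rcases hε with rfl | rfl
      · exact ⟨.inl a, rfl⟩
      · exact ⟨.inl (a + 1), by simp [Sym2.eq_swap]⟩
    intro e he
    induction e using Sym2.ind with
    | _ u w =>
      rcases u with a | a <;> rcases w with b | b
      · rcases sunlet_adj_inl_inl.mp he with rfl | rfl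
        · simpa using hcycle a
        · simpa [Sym2.eq_swap] using hcycle b
      · obtain rfl := sunlet_adj_inl_inr.mp he
        exact ⟨.inr a, trivial, Sym2.eq_swap⟩
      · obtain rfl := sunlet_adj_inr_inl.mp he
        exact ⟨.inr a, trivial, rfl⟩
      · exact absurd he sunlet_not_adj_inr_inr

end Sunlet

/-- For `p ≥ 3`, the sunlet `S¹_p` admits exactly two FSM orientations: functions `f`
on the vertices with `f v` adjacent to `v` such that `v ↦ {v, f v}` is a bijection
from vertices onto edges; namely `inr k ↦ inl k, inl k ↦ inl (k+1)` and
`inr k ↦ inl k, inl k ↦ inl (k-1)`. -/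
theorem sunlet_fsm_orientation_unique (p : ℕ) (hp : 3 ≤ p) :
    {f : (ZMod p ⊕ ZMod p) → (ZMod p ⊕ ZMod p) |
        (∀ v, (sunlet p).Adj (f v) v) ∧
        Set.BijOn (fun v => s(v, f v)) Set.univ (sunlet p).edgeSet} =
      {Sum.elim (fun k => Sum.inl (k + 1)) (fun k => Sum.inl k),
       Sum.elim (fun k => Sum.inl (k - 1)) (fun k => Sum.inl k)} ∧
    (Sum.elim (fun k : ZMod p => Sum.inl (k + 1)) (fun k => Sum.inl k) :
        (ZMod p ⊕ ZMod p) → (ZMod p ⊕ ZMod p)) ≠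
      Sum.elim (fun k => Sum.inl (k - 1)) (fun k => Sum.inl k) := by
  have : Fact (1 < p) := ⟨by omega⟩
  have htwo : (2 : ZMod p) ≠ 0 := by
    simpa using (ZMod.val_natCast_of_lt (show 2 < p by omega)).trans_ne two_ne_zero
  change {f | (sunlet p).IsFSMOrientation f} = _ ∧ _
  refine ⟨Set.ext fun f => ⟨fun hf => ?_, ?_⟩, fun h => htwo ?_⟩
  · choose g hg using sunlet_apply_inl_of_isFSMOrientation hf
    have hf_eq : f = Sum.elim (fun k => .inl (g k)) .inl := by
      funext v
      rcases v with k | k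
      · exact (hg k).1
      · exact sunlet_apply_inr_of_adj hf.1 k
    have hinv : ∀ k, g (g k) ≠ k := fun k h =>
      hf.apply_apply_ne (.inl k) (by rw [(hg k).1, (hg (g k)).1, h])
    rcases ZMod.eq_add_one_or_eq_sub_one (fun k => (hg k).2) hinv with rfl | rfl
    · exact Or.inl hf_eq
    · exact Or.inr hf_eq
  · rintro (rfl | rfl) <;> rw [Set.mem_ofPred_eq]
    · exact sunlet_isFSMOrientation_shift (Or.inl rfl) (by rwa [one_add_one_eq_two])
    · simpa only [← sub_eq_add_neg] using sunlet_isFSMOrientation_shift (ε := -1) (Or.inr rfl)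
        (by rwa [← neg_add, neg_ne_zero, one_add_one_eq_two])
  · have h0 := congrFun h (.inl 0)
    simp only [Sum.elim_inl, Sum.inl.injEq, zero_add, zero_sub] at h0
    linear_combination h0
end
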